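/- arXiv:2601.01542 — 5 statements merged into one kernel-verified Lean document; each statement's English description precedes it below -/
import Mathlib

section
/- Let G be a graph on n vertices with adjacency matrix A(G), and let H be a graph on m vertices with a root vertex v. Then the adjacency matrix of the rooted product G∘H^{(v)} can be written as A(H) ⊗ I_n + D_v ⊗ A(G), where D_v is the diagonal matrix with 1 in position (v,v) and ⊗ is the Kronecker product, under a suitable ordering of the vertices of G∘H^{(v)}. -/
open Matrix Kronecker

/-- The rooted product `G ∘ H^(v)`: take `n` copies of `H` (one for each vertex of `G`)
and identify the root `v` of the `i`-th copy with the `i`-th vertex of `G`.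
Vertices are pairs `(j, i)` with `j ∈ V(H)`, `i ∈ V(G)`, where `(v, i)` is vertex `i` of `G`. -/
def rootedProduct {n m : ℕ} (G : SimpleGraph (Fin n)) (H : SimpleGraph (Fin m)) (v : Fin m) :
    SimpleGraph (Fin m × Fin n) where
  Adj p q := (p.2 = q.2 ∧ H.Adj p.1 q.1) ∨ (p.1 = v ∧ q.1 = v ∧ G.Adj p.2 q.2)
  symm := by
    constructor
    rintro p q (⟨h1, h2⟩ | ⟨h1, h2, h3⟩)
    · exact Or.inl ⟨h1.symm, h2.symm⟩
    · exact Or.inr ⟨h2, h1, h3.symm⟩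
  loopless := by
    constructor
    rintro p (⟨_, h⟩ | ⟨_, _, h⟩)
    · exact H.loopless.irrefl _ h
    · exact G.loopless.irrefl _ h

instance {n m : ℕ} (G : SimpleGraph (Fin n)) (H : SimpleGraph (Fin m)) (v : Fin m)
    [DecidableRel G.Adj] [DecidableRel H.Adj] : DecidableRel (rootedProduct G H v).Adj :=
  fun _ _ => inferInstanceAs (Decidable (_ ∨ _))

/-! The rooted product is the edge-disjoint union of `n` copies of `H`, i.e. the box product of
`H` with the edgeless graph on `Fin n`, and of one copy of `G` placed on the root layer
`{v} × Fin n`. Adjacency matrices of edge-disjoint graphs add up, and the two pieces have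
adjacency matrices `A(H) ⊗ I_n` and `D_v ⊗ A(G)`. -/

namespace SimpleGraph

open Function.Embedding

variable {V α β R : Type*}

theorem adjMatrix_eq_add_of_eq_sup [AddZeroClass R] [One R] {K G₁ G₂ : SimpleGraph V}
    [DecidableRel K.Adj] [DecidableRel G₁.Adj] [DecidableRel G₂.Adj]
    (hK : K = G₁ ⊔ G₂) (h : Disjoint G₁ G₂) :
    K.adjMatrix R = G₁.adjMatrix R + G₂.adjMatrix R := by
  subst hK
  ext p q
  by_cases h₁ : G₁.Adj p q
  · simp [h₁, disjoint_left.mp h p q h₁]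
  · simp [h₁]

theorem adjMatrix_boxProd_bot [MulZeroOneClass R] [DecidableEq β] (G : SimpleGraph α)
    [DecidableRel G.Adj] [DecidableRel (G □ (⊥ : SimpleGraph β)).Adj] :
    (G □ (⊥ : SimpleGraph β)).adjMatrix R = G.adjMatrix R ⊗ₖ 1 := by
  ext ⟨a, b⟩ ⟨a', b'⟩
  simp only [adjMatrix_apply, boxProd_adj, bot_adj, false_and, or_false, kroneckerMap_apply,
    one_apply, ite_zero_mul_ite_zero, mul_one]

theorem map_sectR_adj (G : SimpleGraph β) (a : α) {p q : α × β} :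
    (G.map (sectR a β)).Adj p q ↔ p.1 = a ∧ q.1 = a ∧ G.Adj p.2 q.2 := by
  obtain ⟨x, y⟩ := p
  obtain ⟨x', y'⟩ := q
  simp only [map_adj, sectR_apply, Prod.mk.injEq]
  constructor
  · rintro ⟨y₁, y₂, hG, ⟨rfl, rfl⟩, rfl, rfl⟩
    exact ⟨rfl, rfl, hG⟩
  · rintro ⟨rfl, rfl, hG⟩
    exact ⟨y, y', hG, ⟨rfl, rfl⟩, rfl, rfl⟩

theorem adjMatrix_map_sectR [MulZeroOneClass R] [DecidableEq α] (G : SimpleGraph β)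
    [DecidableRel G.Adj] (a : α) [DecidableRel (G.map (sectR a β)).Adj] :
    (G.map (sectR a β)).adjMatrix R = single a a 1 ⊗ₖ G.adjMatrix R := by
  ext ⟨x, y⟩ ⟨x', y'⟩
  simp only [adjMatrix_apply, map_sectR_adj, kroneckerMap_apply, single_apply,
    ite_zero_mul_ite_zero, mul_one, @eq_comm _ a, and_assoc]

theorem disjoint_boxProd_bot_map_sectR (H : SimpleGraph α) (G : SimpleGraph β) (a : α) :
    Disjoint (H □ (⊥ : SimpleGraph β)) (G.map (sectR a β)) := by
  refine disjoint_left.mpr fun p q hH hG => ?_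
  obtain ⟨-, hpq⟩ | ⟨hbot, -⟩ := hH
  · exact ((map_sectR_adj G a).mp hG).2.2.ne hpq
  · exact hbot

end SimpleGraph

open SimpleGraph Function.Embedding in
theorem rootedProduct_eq_boxProd_bot_sup_map {n m : ℕ} (G : SimpleGraph (Fin n))
    (H : SimpleGraph (Fin m)) (v : Fin m) :
    rootedProduct G H v = H.boxProd ⊥ ⊔ G.map (sectR v (Fin n)) := by
  ext p q
  simp only [rootedProduct, sup_adj, boxProd_adj, bot_adj, false_and, or_false, map_sectR_adj,
    and_comm]

/-- The adjacency matrix of the rooted product `G ∘ H^(v)` equals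
`A(H) ⊗ I_n + D_v ⊗ A(G)`, where `D_v` has a single `1` at position `(v,v)`. -/
theorem adjMatrix_rootedProduct {n m : ℕ} (G : SimpleGraph (Fin n)) (H : SimpleGraph (Fin m))
    (v : Fin m) [DecidableRel G.Adj] [DecidableRel H.Adj] :
    (rootedProduct G H v).adjMatrix ℝ =
      (H.adjMatrix ℝ) ⊗ₖ (1 : Matrix (Fin n) (Fin n) ℝ) +
        (Matrix.single v v (1 : ℝ)) ⊗ₖ (G.adjMatrix ℝ) := by
  classical
  rw [SimpleGraph.adjMatrix_eq_add_of_eq_sup (rootedProduct_eq_boxProd_bot_sup_map G H v)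
      (SimpleGraph.disjoint_boxProd_bot_map_sectR H G v),
    SimpleGraph.adjMatrix_boxProd_bot, SimpleGraph.adjMatrix_map_sectR]
end

section
/- Let G be a graph and H^{(v)} a rooted graph with adjacency matrix M(H) and let M^{(v)}(H) be M(H) with the row and column of v deleted. Then det M(G∘H^{(v)}) = det( (det M(H))·I_n + (det M^{(v)}(H))·M(G) ), where M(G∘H^{(v)}) = M(H) ⊗ I_n + D_v ⊗ M(G). -/
/-!
Diagonalize `M(G) = U D U*` orthogonally. Conjugating by `I ⊗ U` turns `M(H) ⊗ I + D_v ⊗ M(G)`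
into a block-diagonal matrix with blocks `M(H) + λₖ D_v`, and expanding along column `v` gives
`det (M(H) + λ D_v) = det M(H) + λ det M^{(v)}(H)`. Conjugating by `U` turns the right-hand side
into the diagonal matrix with these same entries.
-/

open Matrix Kronecker

namespace Matrix

variable {R : Type*} [CommRing R]

theorem det_add_smul_single {m : ℕ} (A : Matrix (Fin (m + 1)) (Fin (m + 1)) R)
    (v : Fin (m + 1)) (c : R) :
    (A + c • single v v 1).det = A.det + c * (A.submatrix v.succAbove v.succAbove).det := by
  have hminor : ∀ i : Fin (m + 1), ((A + c • single v v 1).submatrix i.succAbove v.succAbove) =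
      A.submatrix i.succAbove v.succAbove := fun i => by
    ext j k
    simp
  simp only [det_succ_column _ v, hminor, add_apply, smul_apply, single_apply, add_mul,
    mul_add, Finset.sum_add_distrib]
  simp [← two_mul, mul_comm]

variable {ι κ : Type*} [DecidableEq κ]

theorem kronecker_one_add_kronecker_diagonal (A B : Matrix ι ι R) (d : κ → R) :
    A ⊗ₖ (1 : Matrix κ κ R) + B ⊗ₖ diagonal d = blockDiagonal fun k => A + d k • B := by
  ext ⟨i, k⟩ ⟨j, k'⟩
  by_cases hk : k = k' <;> simp [hk, blockDiagonal_apply, mul_comm]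

variable [Fintype κ]

theorem det_kronecker_one_add_kronecker_conj [Fintype ι] [DecidableEq ι] (A B : Matrix ι ι R)
    {U U' : Matrix κ κ R} (hUU' : U * U' = 1) (hU'U : U' * U = 1) (X : Matrix κ κ R) :
    (A ⊗ₖ (1 : Matrix κ κ R) + B ⊗ₖ (U * X * U')).det =
      (A ⊗ₖ (1 : Matrix κ κ R) + B ⊗ₖ X).det := by
  have hconj : A ⊗ₖ (1 : Matrix κ κ R) + B ⊗ₖ (U * X * U') =
      ((1 : Matrix ι ι R) ⊗ₖ U) * (A ⊗ₖ 1 + B ⊗ₖ X) * (1 ⊗ₖ U') := by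
    simp only [Matrix.mul_add, Matrix.add_mul, ← mul_kronecker_mul, Matrix.one_mul,
      Matrix.mul_one, hUU']
  rw [hconj]
  exact det_conj_of_mul_eq_one (by rw [← mul_kronecker_mul, hUU', one_mul, one_kronecker_one])
    (by rw [← mul_kronecker_mul, hU'U, one_mul, one_kronecker_one])

theorem det_smul_one_add_smul_conj (a b : R) {U U' : Matrix κ κ R}
    (hUU' : U * U' = 1) (hU'U : U' * U = 1) (X : Matrix κ κ R) :
    (a • (1 : Matrix κ κ R) + b • (U * X * U')).det =
      (a • (1 : Matrix κ κ R) + b • X).det := by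
  have hconj : a • (1 : Matrix κ κ R) + b • (U * X * U') = U * (a • 1 + b • X) * U' := by
    simp only [Matrix.mul_add, Matrix.add_mul, Matrix.mul_smul, Matrix.smul_mul,
      Matrix.mul_one, hUU']
  rw [hconj, det_conj_of_mul_eq_one hUU' hU'U]

theorem det_rootedProduct_diagonal {m : ℕ} (A : Matrix (Fin (m + 1)) (Fin (m + 1)) R)
    (v : Fin (m + 1)) (d : κ → R) :
    (A ⊗ₖ (1 : Matrix κ κ R) + single v v (1 : R) ⊗ₖ diagonal d).det =
      (A.det • (1 : Matrix κ κ R) +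
        (A.submatrix v.succAbove v.succAbove).det • diagonal d).det := by
  rw [kronecker_one_add_kronecker_diagonal, det_blockDiagonal, smul_one_eq_diagonal,
    ← diagonal_smul, diagonal_add, det_diagonal]
  simp only [det_add_smul_single, Pi.smul_apply, smul_eq_mul, mul_comm]

end Matrix

theorem det_rootedProduct_matrix_general {n m : ℕ}
    (MG : Matrix (Fin n) (Fin n) ℝ) (hMG : MG.IsSymm)
    (MH : Matrix (Fin (m + 1)) (Fin (m + 1)) ℝ) (v : Fin (m + 1)) :
    (MH ⊗ₖ (1 : Matrix (Fin n) (Fin n) ℝ) +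
        (Matrix.single v v (1 : ℝ)) ⊗ₖ MG).det =
      (MH.det • (1 : Matrix (Fin n) (Fin n) ℝ) +
        (MH.submatrix v.succAbove v.succAbove).det • MG).det := by
  have hHerm : MG.IsHermitian := isHermitian_iff_isSymm.mpr hMG
  set U : Matrix (Fin n) (Fin n) ℝ := ↑hHerm.eigenvectorUnitary
  have hspec : MG = U * diagonal (RCLike.ofReal ∘ hHerm.eigenvalues) * star U :=
    hHerm.spectral_theorem
  have hUU' : U * star U = 1 := mem_unitaryGroup_iff.mp hHerm.eigenvectorUnitary.2
  have hU'U : star U * U = 1 := mem_unitaryGroup_iff'.mp hHerm.eigenvectorUnitary.2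
  rw [hspec, det_kronecker_one_add_kronecker_conj _ _ hUU' hU'U,
    det_smul_one_add_smul_conj _ _ hUU' hU'U, det_rootedProduct_diagonal]

/-- `det M(G∘H^(v)) = det((det M(H))·I_n + (det M^(v)(H))·M(G))`, where
`M(G∘H^(v)) = M(H) ⊗ I_n + D_v ⊗ M(G)` and `M^(v)(H)` is the principal submatrix
of `M(H)` deleting row and column `v`. -/
theorem det_rootedProduct_matrix {n m : ℕ}
    (MG : Matrix (Fin n) (Fin n) ℝ) (hMG : MG.IsSymm)
    (MH : Matrix (Fin (m + 1)) (Fin (m + 1)) ℝ) (hMH : MH.IsSymm) (v : Fin (m + 1)) :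
    (MH ⊗ₖ (1 : Matrix (Fin n) (Fin n) ℝ) +
        (Matrix.single v v (1 : ℝ)) ⊗ₖ MG).det =
      (MH.det • (1 : Matrix (Fin n) (Fin n) ℝ) +
        (MH.submatrix v.succAbove v.succAbove).det • MG).det :=
  det_rootedProduct_matrix_general MG hMG MH v
end

section
/- Let A and B be n×n and m×m real symmetric matrices, and D_v the m×m diagonal matrix with a single 1 at position (v,v). If det B = ±1 and the principal submatrix B^{(v)} (deleting row/column v) has det B^{(v)} = 0, then det(B ⊗ I_n + D_v ⊗ A) = ±1 whenever det A = ±1. Similarly if det B = 0 and det B^{(v)} = ±1. -/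
open Matrix Kronecker Polynomial

/-!
All blocks `B i j • 1 + [i = j = v] • A` of `B ⊗ₖ 1 + single v v 1 ⊗ₖ A` are images of
polynomials under `aeval A`, so by Silvester's theorem on block matrices with commuting blocks
(`Matrix.det_det`) its determinant is `aeval A` applied to `det (B.map C + single v v X)`.
Expanding that determinant along row `v` gives `C (det B) + X * C (det B^(v))`, hence
`det (B ⊗ₖ 1 + single v v 1 ⊗ₖ A) = det (det B • 1 + det B^(v) • A)`, and both cases of the
theorem reduce to the determinant of a scalar multiple of `1` or of `A`.
-/

theorem Matrix.det_add_single_self {R : Type*} [CommRing R] {m : ℕ}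
    (B : Matrix (Fin (m + 1)) (Fin (m + 1)) R) (v : Fin (m + 1)) (t : R) :
    (B + single v v t).det = B.det + t * (B.submatrix v.succAbove v.succAbove).det := by
  have hminor (j : Fin (m + 1)) :
      (B + single v v t).submatrix v.succAbove j.succAbove =
        B.submatrix v.succAbove j.succAbove := by
    ext i k
    simp
  simp only [det_succ_row _ v, hminor, Matrix.add_apply, mul_add, add_mul,
    Finset.sum_add_distrib, add_right_inj]
  simp [single_apply, ← two_mul, pow_mul]

theorem Matrix.det_kronecker_one_add_single_kronecker {R n : Type*} [CommRing R] [Fintype n]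
    [DecidableEq n] {m : ℕ} (A : Matrix n n R) (B : Matrix (Fin (m + 1)) (Fin (m + 1)) R)
    (v : Fin (m + 1)) :
    (B ⊗ₖ (1 : Matrix n n R) + single v v 1 ⊗ₖ A).det =
      (B.det • 1 + (B.submatrix v.succAbove v.succAbove).det • A).det := by
  set M : Matrix (Fin (m + 1)) (Fin (m + 1)) R[X] := B.map C + single v v X
  have hdet : M.det = C B.det + X * C (B.submatrix v.succAbove v.succAbove).det := by
    rw [det_add_single_self, submatrix_map]
    simp only [RingHom.map_det, RingHom.mapMatrix_apply]
  have hcomp : (M.map (aeval A).toRingHom).comp _ _ _ _ R =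
      B ⊗ₖ (1 : Matrix n n R) + single v v 1 ⊗ₖ A := by
    ext ⟨i, k⟩ ⟨j, l⟩
    by_cases h : v = i ∧ v = j
    · obtain ⟨rfl, rfl⟩ := h
      simp [M, Algebra.algebraMap_eq_smul_one]
    · simp [M, Algebra.algebraMap_eq_smul_one, h]
  rw [← hcomp, ← det_det, hdet]
  simp [Algebra.algebraMap_eq_smul_one]

theorem pow_mul_eq_one_or_neg_one {R : Type*} [Monoid R] [HasDistribNeg R] {a b : R}
    (ha : a = 1 ∨ a = -1) (hb : b = 1 ∨ b = -1) (k : ℕ) :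
    a ^ k * b = 1 ∨ a ^ k * b = -1 := by
  have hak : a ^ k = 1 ∨ a ^ k = -1 := by
    rcases ha with rfl | rfl
    · simp
    · exact neg_one_pow_eq_or R k
  rcases hak with h | h <;> rcases hb with rfl | rfl <;> simp [h]

theorem det_kronecker_pm_one_general {n m : ℕ}
    (A : Matrix (Fin n) (Fin n) ℝ)
    (B : Matrix (Fin (m + 1)) (Fin (m + 1)) ℝ) (v : Fin (m + 1))
    (hBv : ((B.det = 1 ∨ B.det = -1) ∧ (B.submatrix v.succAbove v.succAbove).det = 0) ∨
      (B.det = 0 ∧ ((B.submatrix v.succAbove v.succAbove).det = 1 ∨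
        (B.submatrix v.succAbove v.succAbove).det = -1)))
    (hAdet : A.det = 1 ∨ A.det = -1) :
    (B ⊗ₖ (1 : Matrix (Fin n) (Fin n) ℝ) +
        (Matrix.single v v (1 : ℝ)) ⊗ₖ A).det = 1 ∨
      (B ⊗ₖ (1 : Matrix (Fin n) (Fin n) ℝ) +
        (Matrix.single v v (1 : ℝ)) ⊗ₖ A).det = -1 := by
  rw [det_kronecker_one_add_single_kronecker]
  rcases hBv with ⟨hB, hBv0⟩ | ⟨hB0, hBv⟩
  · rw [hBv0, zero_smul, add_zero, det_smul]
    exact pow_mul_eq_one_or_neg_one hB (.inl det_one) _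
  · rw [hB0, zero_smul, zero_add, det_smul]
    exact pow_mul_eq_one_or_neg_one hBv hAdet _

/-- If either (`det B = ±1` and `det B^(v) = 0`) or (`det B = 0` and `det B^(v) = ±1`),
where `B^(v)` is `B` with row and column `v` deleted, then for any symmetric `A` with
`det A = ±1` we have `det (B ⊗ I_n + D_v ⊗ A) = ±1`. -/
theorem det_kronecker_pm_one {n m : ℕ}
    (A : Matrix (Fin n) (Fin n) ℝ) (hA : A.IsSymm)
    (B : Matrix (Fin (m + 1)) (Fin (m + 1)) ℝ) (hB : B.IsSymm) (v : Fin (m + 1))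
    (hBv : ((B.det = 1 ∨ B.det = -1) ∧ (B.submatrix v.succAbove v.succAbove).det = 0) ∨
      (B.det = 0 ∧ ((B.submatrix v.succAbove v.succAbove).det = 1 ∨
        (B.submatrix v.succAbove v.succAbove).det = -1)))
    (hAdet : A.det = 1 ∨ A.det = -1) :
    (B ⊗ₖ (1 : Matrix (Fin n) (Fin n) ℝ) +
        (Matrix.single v v (1 : ℝ)) ⊗ₖ A).det = 1 ∨
      (B ⊗ₖ (1 : Matrix (Fin n) (Fin n) ℝ) +
        (Matrix.single v v (1 : ℝ)) ⊗ₖ A).det = -1 :=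
  det_kronecker_pm_one_general A B v hBv hAdet
end

section
/- Let f(x) = det(xI − M(H)) and g(x) = det(xI − M^{(v)}(H)) where M(H) is m×m and M^{(v)}(H) is the principal submatrix deleting row/column v. For scalars λ₁ ≠ λ₂, let μ₁^{(j)} (resp. μ₂^{(j)}), j = 1,…,m, be the roots (with multiplicity) of f − λ₁g (resp. f − λ₂g). Then ∏_{j₁=1}^m ∏_{j₂=1}^m (μ₂^{(j₂)} − μ₁^{(j₁)}) = (λ₂ − λ₁)^m · Res(f, g). -/
/-!
At a root `y` of `f - λ₂ g` we have `(f - λ₁ g)(y) = (λ₂ - λ₁) g(y)`, so the double product is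
`(λ₂ - λ₁)^(m+1) ∏ g(y) = (λ₂ - λ₁)^(m+1) Res(f - λ₂ g, g)`, and a resultant does not change when
a multiple of `g` of low enough degree is added to `f`.
-/

open Matrix Polynomial

/-- The Sylvester matrix of `f` and `g` (with `g.natDegree` rows of coefficients of `f`
and `f.natDegree` rows of coefficients of `g`, written in descending order). -/
noncomputable def sylvester {R : Type*} [CommRing R] (f g : Polynomial R) :
    Matrix (Fin (g.natDegree + f.natDegree)) (Fin (g.natDegree + f.natDegree)) R :=
  Matrix.of fun i j =>
    if (i : ℕ) < g.natDegree then
      if (i : ℕ) ≤ (j : ℕ) ∧ (j : ℕ) ≤ (i : ℕ) + f.natDegree then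
        f.coeff ((i : ℕ) + f.natDegree - (j : ℕ))
      else 0
    else
      if (i : ℕ) - g.natDegree ≤ (j : ℕ) ∧ (j : ℕ) ≤ (i : ℕ) - g.natDegree + g.natDegree then
        g.coeff ((i : ℕ) - g.natDegree + g.natDegree - (j : ℕ))
      else 0

/-- The resultant of two polynomials, as the determinant of their Sylvester matrix. -/
noncomputable def resultant {R : Type*} [CommRing R] (f g : Polynomial R) : R :=
  (_root_.sylvester f g).det

theorem sylvester_eq_submatrix_transpose {R : Type*} [CommRing R] (f g : R[X]) :
    _root_.sylvester f g =
      (Polynomial.sylvester f g f.natDegree g.natDegree)ᵀ.submatrix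
        ((finCongr (add_comm _ _)).trans Fin.revPerm)
        ((finCongr (add_comm _ _)).trans Fin.revPerm) := by
  ext ⟨i, hi⟩ ⟨j, hj⟩
  simp only [_root_.sylvester, Polynomial.sylvester, Matrix.of_apply, Matrix.submatrix_apply,
    Matrix.transpose_apply, Equiv.trans_apply, finCongr_apply, Fin.revPerm_apply]
  by_cases h : i < g.natDegree
  · have hrow : Fin.rev (Fin.cast (add_comm _ _) ⟨i, hi⟩) =
        Fin.natAdd f.natDegree ⟨g.natDegree - 1 - i, by omega⟩ := Fin.ext (by simp; omega)
    rw [hrow, Fin.addCases_right]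
    simp only [if_pos h, Set.mem_Icc, Fin.val_rev, Fin.val_cast]
    split_ifs <;> first | rfl | (congr 1; omega)
  · have hrow : Fin.rev (Fin.cast (add_comm _ _) ⟨i, hi⟩) =
        Fin.castAdd g.natDegree ⟨g.natDegree + f.natDegree - 1 - i, by omega⟩ :=
      Fin.ext (by simp; omega)
    rw [hrow, Fin.addCases_left]
    simp only [if_neg h, Set.mem_Icc, Fin.val_rev, Fin.val_cast]
    split_ifs <;> first | rfl | (congr 1; omega)

theorem resultant_eq_polynomial_resultant {R : Type*} [CommRing R] (f g : R[X]) :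
    _root_.resultant f g = Polynomial.resultant f g := by
  rw [_root_.resultant, sylvester_eq_submatrix_transpose, Matrix.det_submatrix_equiv_self,
    Matrix.det_transpose, Polynomial.resultant]

namespace Polynomial

variable {K : Type*} [Field K] {f g : K[X]}

theorem monic_sub_C_mul (hf : f.Monic) (hfg : g.natDegree < f.natDegree) (c : K) :
    (f - C c * g).Monic :=
  hf.sub_of_left (degree_lt_degree ((natDegree_C_mul_le c g).trans_lt hfg))

theorem natDegree_sub_C_mul (hfg : g.natDegree < f.natDegree) (c : K) :
    (f - C c * g).natDegree = f.natDegree :=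
  natDegree_sub_eq_left_of_natDegree_lt ((natDegree_C_mul_le c g).trans_lt hfg)

theorem resultant_sub_C_mul_left (hfg : g.natDegree < f.natDegree) (c : K) :
    resultant (f - C c * g) g = resultant f g := by
  rw [natDegree_sub_C_mul hfg, show f - C c * g = f + g * C (-c) by simp [mul_comm]; ring]
  exact resultant_add_mul_left _ _ _ _ _ (by simpa using hfg.le) le_rfl

theorem eval_sub_C_mul_of_isRoot {a b y : K} (hy : (f - C b * g).IsRoot y) :
    (f - C a * g).eval y = (b - a) * g.eval y := by
  simp only [IsRoot, eval_sub, eval_mul, eval_C] at hy ⊢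
  linear_combination hy

theorem prod_roots_sub_roots_of_sub_C_mul [IsAlgClosed K] (hf : f.Monic)
    (hfg : g.natDegree < f.natDegree) (a b : K) :
    ((f - C b * g).roots.bind fun y => (f - C a * g).roots.map (y - ·)).prod =
      (b - a) ^ f.natDegree * resultant f g := by
  have hsplit : (f - C b * g).Splits := IsAlgClosed.splits _
  calc ((f - C b * g).roots.bind fun y => (f - C a * g).roots.map (y - ·)).prod
      = ((f - C b * g).roots.map fun y => (f - C a * g).eval y).prod := by
        rw [Multiset.prod_bind]
        simp only [(IsAlgClosed.splits _).eval_eq_prod_roots_of_monic (monic_sub_C_mul hf hfg a)]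
    _ = ((f - C b * g).roots.map fun y => (b - a) * g.eval y).prod :=
        congrArg _ <| Multiset.map_congr rfl fun y hy =>
          eval_sub_C_mul_of_isRoot (isRoot_of_mem_roots hy)
    _ = (b - a) ^ f.natDegree * resultant (f - C b * g) g := by
        rw [Multiset.prod_map_mul, Multiset.map_const', Multiset.prod_replicate,
          ← hsplit.natDegree_eq_card_roots, resultant_eq_prod_eval _ _ _ le_rfl hsplit,
          (monic_sub_C_mul hf hfg b).leadingCoeff, one_pow, one_mul, natDegree_sub_C_mul hfg]
    _ = (b - a) ^ f.natDegree * resultant f g := by rw [resultant_sub_C_mul_left hfg]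

end Polynomial

theorem prod_root_differences_eq_general {m : ℕ}
    (M : Matrix (Fin (m + 1)) (Fin (m + 1)) ℝ) (v : Fin (m + 1))
    (f g : Polynomial ℂ)
    (hf : f = M.charpoly.map (algebraMap ℝ ℂ))
    (hg : g = (M.submatrix v.succAbove v.succAbove).charpoly.map (algebraMap ℝ ℂ))
    (lam₁ lam₂ : ℂ) :
    (((f - Polynomial.C lam₂ * g).roots).bind fun b =>
        ((f - Polynomial.C lam₁ * g).roots).map fun a => b - a).prod =
      (lam₂ - lam₁) ^ (m + 1) * _root_.resultant f g := by
  have hfd : f.natDegree = m + 1 := by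
    rw [hf, M.charpoly_monic.natDegree_map, charpoly_natDegree_eq_dim, Fintype.card_fin]
  have hgd : g.natDegree = m := by
    rw [hg, charpoly_monic _ |>.natDegree_map, charpoly_natDegree_eq_dim, Fintype.card_fin]
  rw [resultant_eq_polynomial_resultant, ← hfd]
  exact prod_roots_sub_roots_of_sub_C_mul (hf ▸ M.charpoly_monic.map _) (by omega) lam₁ lam₂

/-- Let `f`, `g` be the characteristic polynomials (viewed in `ℂ[x]`) of a real symmetric
`(m+1) × (m+1)` matrix `M` and of its principal submatrix deleting row and column `v`.
For `λ₁ ≠ λ₂`, if `μ₁^(j)` and `μ₂^(j)` are the complex roots (with multiplicity) of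
`f − λ₁ g` and `f − λ₂ g` respectively, then
`∏_{j₁} ∏_{j₂} (μ₂^(j₂) − μ₁^(j₁)) = (λ₂ − λ₁)^(m+1) · Res(f, g)`. -/
theorem prod_root_differences_eq {m : ℕ}
    (M : Matrix (Fin (m + 1)) (Fin (m + 1)) ℝ) (hM : M.IsSymm) (v : Fin (m + 1))
    (f g : Polynomial ℂ)
    (hf : f = M.charpoly.map (algebraMap ℝ ℂ))
    (hg : g = (M.submatrix v.succAbove v.succAbove).charpoly.map (algebraMap ℝ ℂ))
    (lam₁ lam₂ : ℂ) (hlam : lam₁ ≠ lam₂) :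
    (((f - Polynomial.C lam₂ * g).roots).bind fun b =>
        ((f - Polynomial.C lam₁ * g).roots).map fun a => b - a).prod =
      (lam₂ - lam₁) ^ (m + 1) * _root_.resultant f g :=
  prod_root_differences_eq_general M v f g hf hg lam₁ lam₂
end

section
/- Let U = [ξ₁,…,ξₙ] be an n×n matrix with columns ξ_i, and for each i ∈ {1,…,n} let ζ_i^{(1)},…,ζ_i^{(m)} be vectors in ℝᵐ. Form the mn×mn matrix E whose column indexed by (i,j) (in colexicographic order of (i,j)) is ζ_i^{(j)} ⊗ ξ_i. Then det E = (det U)^m · ∏_{i=1}^n det[ζ_i^{(1)},…,ζ_i^{(m)}]. -/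
/-!
`E` factors as `(1 ⊗ₖ U) * blockDiagonal Z`: column `(j, i)` of `blockDiagonal Z` is `ζ_i^(j)`
placed in block `i`, and `1 ⊗ₖ U` sends `e_k ⊗ e_i` to `e_k ⊗ ξ_i`. The determinant is then
multiplicative, `det (1 ⊗ₖ U) = (det U)^m`, and a block diagonal determinant is the product
of the blocks' determinants.
-/

open Matrix

open scoped Kronecker

theorem Matrix.one_kronecker_mul_blockDiagonal {R m n : Type*} [CommSemiring R]
    [Fintype m] [Fintype n] [DecidableEq m] [DecidableEq n]
    (U : Matrix n n R) (Z : n → Matrix m m R) :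
    ((1 : Matrix m m R) ⊗ₖ U) * blockDiagonal Z = of fun p q => Z q.2 p.1 q.1 * U p.2 q.2 := by
  ext ⟨k, l⟩ ⟨j, i⟩
  simp [mul_apply, blockDiagonal_apply, one_apply, Fintype.sum_prod_type, mul_comm]

/-- Let `U = [ξ₁, …, ξₙ]` and, for each `i`, let `Z i = [ζ_i^(1), …, ζ_i^(m)]`.
If `E` is the `mn × mn` matrix whose column indexed by `(j, i)` (colexicographic:
`j` outer, `i` inner) is `ζ_i^(j) ⊗ ξ_i`, then
`det E = (det U)^m · ∏_i det Z i`. -/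
theorem det_kronecker_columns {n m : ℕ}
    (ξ : Fin n → Fin n → ℝ) (ζ : Fin n → Fin m → Fin m → ℝ)
    (U : Matrix (Fin n) (Fin n) ℝ) (hU : U = Matrix.of fun k i => ξ i k)
    (Z : Fin n → Matrix (Fin m) (Fin m) ℝ) (hZ : ∀ i, Z i = Matrix.of fun k j => ζ i j k)
    (E : Matrix (Fin m × Fin n) (Fin m × Fin n) ℝ)
    (hE : E = Matrix.of fun p q => ζ q.2 q.1 p.1 * ξ q.2 p.2) :
    E.det = U.det ^ m * ∏ i, (Z i).det := by
  have hfac : E = ((1 : Matrix (Fin m) (Fin m) ℝ) ⊗ₖ U) * blockDiagonal Z := by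
    rw [one_kronecker_mul_blockDiagonal, hE, hU]
    simp [hZ]
  rw [hfac, det_mul, det_kronecker, det_blockDiagonal, det_one, one_pow, one_mul, Fintype.card_fin]
end
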